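/- arXiv:1502.04160 — 2 statements merged into one kernel-verified Lean document; each statement's English description precedes it below -/
import Mathlib

section
/- For every integer n ≥ 3 and every integer ξ with n/log(n) ≤ ξ ≤ n/2, the largest eigenvalue β(ξ) of M(ξ) satisfies β(ξ) ≤ 1 − (3/4)·(ξ/n)². (Here log denotes the natural logarithm.) -/
/-- The `n×n` real symmetric matrix `M(ξ)` with `(j,j)` entry `(1/2)·cos(2πξj/n)`,
entries `1/4` for `k ≡ j ± 1 (mod n)` (including the corners), and `0` elsewhere. -/
noncomputable def Mmat (n : ℕ) (ξ : ℤ) : Matrix (Fin n) (Fin n) ℝ :=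
  Matrix.of fun j k =>
    if k = j then (1/2) * Real.cos (2 * Real.pi * (ξ : ℝ) * ((j : ℕ) : ℝ) / (n : ℝ))
    else if ((k : ℕ) : ZMod n) = ((j : ℕ) : ZMod n) + 1 ∨
        ((k : ℕ) : ZMod n) = ((j : ℕ) : ZMod n) - 1 then 1/4
    else 0

lemma key_ineq (r θ : ℝ) (hr0 : 0 ≤ r) (hr : r ≤ 1/2) :
    1/16 ≤ ((1 - 3/4*r^2)/2 - Real.cos θ / 4) *
      ((1 - 3/4*r^2)/2 - Real.cos (θ + 2*Real.pi*r) / 4) := by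
  have hca : Real.cos θ = 1 - 2 * Real.sin (θ/2) ^ 2 := by
    have h1 := Real.sin_sq_add_cos_sq (θ/2)
    have h2 := Real.cos_two_mul (θ/2)
    have h3 : 2 * (θ/2) = θ := by ring
    rw [h3] at h2
    linarith
  have hcb : Real.cos (θ + 2*Real.pi*r) = 1 - 2 * Real.sin (θ/2 + Real.pi*r) ^ 2 := by
    have h1 := Real.sin_sq_add_cos_sq (θ/2 + Real.pi*r)
    have h2 := Real.cos_two_mul (θ/2 + Real.pi*r)
    have h3 : 2 * (θ/2 + Real.pi*r) = θ + 2*Real.pi*r := by ring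
    rw [h3] at h2
    linarith
  set a := θ/2 with ha
  set b := θ/2 + Real.pi*r with hb
  have key : Real.cos (a+b) * Real.cos (b - a) = 1 - Real.sin a ^ 2 - Real.sin b ^ 2 := by
    rw [Real.cos_add, Real.cos_sub]
    have pa := Real.sin_sq_add_cos_sq a
    have pb := Real.sin_sq_add_cos_sq b
    nlinarith [pa, pb]
  have hba : b - a = Real.pi * r := by rw [ha, hb]; ring
  have hpr0 : 0 ≤ Real.pi * r := by positivity
  have hpr2 : Real.pi * r ≤ Real.pi / 2 := by nlinarith [Real.pi_pos]
  have hcpr : 0 ≤ Real.cos (Real.pi * r) := Real.cos_nonneg_of_mem_Icc ⟨by linarith, hpr2⟩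
  have hsin : r ≤ Real.sin (Real.pi * r / 2) := by
    have := Real.mul_le_sin (x := Real.pi * r / 2) (by positivity) (by nlinarith [Real.pi_pos])
    have hpi := Real.pi_pos
    calc r = 2 / Real.pi * (Real.pi * r / 2) := by field_simp
    _ ≤ _ := this
  have hcos_pr : Real.cos (Real.pi * r) ≤ 1 - 2 * r^2 := by
    have h2 := Real.cos_two_mul (Real.pi * r / 2)
    have h3 : 2 * (Real.pi * r / 2) = Real.pi * r := by ring
    rw [h3] at h2
    have h1 := Real.sin_sq_add_cos_sq (Real.pi * r / 2)
    nlinarith [hsin, hr0]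
  have hsum : 2 * r^2 ≤ Real.sin a ^ 2 + Real.sin b ^ 2 := by
    have hc1 : Real.cos (a+b) ≤ 1 := Real.cos_le_one _
    rw [hba] at key
    nlinarith [hcpr]
  have hu : 0 ≤ Real.sin a ^ 2 := sq_nonneg _
  have hv : 0 ≤ Real.sin b ^ 2 := sq_nonneg _
  have hr2 : r^2 ≤ 1/4 := by nlinarith
  rw [hca, hcb]
  nlinarith [mul_nonneg hu hv,
    mul_nonneg (sub_nonneg.mpr hsum) (show (0:ℝ) ≤ 1/8 - 3*r^2/16 by nlinarith),
    mul_nonneg (sq_nonneg r) (show (0:ℝ) ≤ 4 - 15*r^2 by nlinarith)]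

lemma fin_val_succ {n : ℕ} [NeZero n] (hn : 3 ≤ n) (j : Fin n) :
    ((j + 1 : Fin n) : ℕ) = ((j : ℕ) + 1) % n := by
  rw [Fin.val_add, Fin.val_one']
  rw [Nat.mod_eq_of_lt (show 1 < n by omega)]

lemma cos_succ (n : ℕ) [NeZero n] (hn : 3 ≤ n) (ξ : ℤ) (j : Fin n) :
    Real.cos (2*Real.pi*(ξ:ℝ)*(((j+1 : Fin n) : ℕ) : ℝ)/(n:ℝ))
      = Real.cos (2*Real.pi*(ξ:ℝ)*((j:ℕ):ℝ)/(n:ℝ) + 2*Real.pi*((ξ:ℝ)/(n:ℝ))) := by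
  have hn0 : (n:ℝ) ≠ 0 := Nat.cast_ne_zero.mpr (by omega)
  rw [fin_val_succ hn j]
  set q := ((j : ℕ) + 1) / n with hq
  have hdiv : ((j:ℕ) + 1) % n + n * q = (j:ℕ) + 1 := Nat.mod_add_div _ _
  have hcast : ((((j:ℕ) + 1) % n : ℕ) : ℝ) = ((j:ℕ) : ℝ) + 1 - (n:ℝ)*q := by
    have := congrArg (Nat.cast : ℕ → ℝ) hdiv
    push_cast at this
    linarith
  rw [hcast]
  have harg : 2*Real.pi*(ξ:ℝ)*(((j:ℕ):ℝ) + 1 - (n:ℝ)*q)/(n:ℝ)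
      = (2*Real.pi*(ξ:ℝ)*((j:ℕ):ℝ)/(n:ℝ) + 2*Real.pi*((ξ:ℝ)/(n:ℝ)))
        + (-((q:ℤ)*ξ) : ℤ) * (2*Real.pi) := by
    push_cast
    field_simp
    ring
  rw [harg, Real.cos_add_int_mul_two_pi]

lemma zmod_iff (n : ℕ) [NeZero n] (hn : 3 ≤ n) (j k : Fin n) :
    (((k:ℕ) : ZMod n) = ((j:ℕ) : ZMod n) + 1) ↔ k = j + 1 := by
  have h : ((((j+1 : Fin n):ℕ)) : ZMod n) = ((j:ℕ) : ZMod n) + 1 := by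
    rw [fin_val_succ hn j, ZMod.natCast_mod]
    push_cast
    ring
  constructor
  · intro h'
    have h2 : (((k:ℕ)) : ZMod n) = (((j+1 : Fin n):ℕ) : ZMod n) := h'.trans h.symm
    have := congrArg ZMod.val h2
    rw [ZMod.val_natCast_of_lt k.isLt, ZMod.val_natCast_of_lt (j+1).isLt] at this
    exact Fin.ext this
  · intro h2; rw [h2]; exact h

lemma zmod_iff' (n : ℕ) [NeZero n] (hn : 3 ≤ n) (j k : Fin n) :
    (((k:ℕ) : ZMod n) = ((j:ℕ) : ZMod n) - 1) ↔ j = k + 1 := by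
  rw [eq_sub_iff_add_eq, eq_comm, ← zmod_iff n hn k j, eq_comm]

lemma fin_ne_succ {n : ℕ} [NeZero n] (hn : 3 ≤ n) (j : Fin n) : j ≠ j + 1 := by
  intro h
  have h2 := congrArg Fin.val h
  rw [fin_val_succ hn j] at h2
  have hj := j.isLt
  rcases lt_or_ge ((j:ℕ) + 1) n with h'|h'
  · rw [Nat.mod_eq_of_lt h'] at h2; omega
  · have he : (j:ℕ) + 1 = n := by omega
    rw [he, Nat.mod_self] at h2; omega

lemma fin_ne_succ_succ {n : ℕ} [NeZero n] (hn : 3 ≤ n) (j : Fin n) : j ≠ j + 1 + 1 := by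
  intro h
  have h2 := congrArg Fin.val h
  rw [fin_val_succ hn (j+1), fin_val_succ hn j] at h2
  have hj := j.isLt
  rcases lt_or_ge ((j:ℕ) + 1) n with h'|h'
  · rw [Nat.mod_eq_of_lt h'] at h2
    rcases lt_or_ge ((j:ℕ) + 1 + 1) n with h''|h''
    · rw [Nat.mod_eq_of_lt h''] at h2; omega
    · have he : (j:ℕ) + 1 + 1 = n := by omega
      rw [he, Nat.mod_self] at h2; omega
  · have he : (j:ℕ) + 1 = n := by omega
    rw [he, Nat.mod_self, Nat.zero_add, Nat.mod_eq_of_lt (by omega)] at h2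
    omega

lemma Mmat_apply (n : ℕ) [NeZero n] (hn : 3 ≤ n) (ξ : ℤ) (j k : Fin n) :
    Mmat n ξ j k = (if k = j then (1/2) * Real.cos (2 * Real.pi * (ξ : ℝ) * ((j : ℕ) : ℝ) / (n : ℝ)) else 0)
      + ((1/4) * (if k = j + 1 then 1 else 0) + (1/4) * (if j = k + 1 then 1 else 0)) := by
  unfold Mmat
  rw [Matrix.of_apply]
  by_cases hkj : k = j
  · subst hkj
    rw [if_pos rfl, if_pos rfl, if_neg (fun h => fin_ne_succ hn k h)]
    ring
  · have hcond := or_congr (zmod_iff n hn j k) (zmod_iff' n hn j k)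
    rw [if_neg hkj, if_neg hkj, if_congr hcond rfl rfl]
    by_cases hc1 : k = j + 1
    · have hc2 : ¬ (j = k + 1) := by
        rw [hc1]; exact fin_ne_succ_succ hn j
      rw [if_pos (Or.inl hc1), if_pos hc1, if_neg hc2]
      ring
    · by_cases hc2 : j = k + 1
      · rw [if_pos (Or.inr hc2), if_neg hc1, if_pos hc2]
        ring
      · rw [if_neg (by tauto), if_neg hc1, if_neg hc2]
        ring

lemma sum_shift {n : ℕ} [NeZero n] (f : Fin n → ℝ) : ∑ j, f (j+1) = ∑ j, f j :=
  Fintype.sum_equiv (Equiv.addRight (1 : Fin n)) (fun x => f (x+1)) f (fun x => by simp)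

lemma mulVec_Mmat (n : ℕ) [NeZero n] (hn : 3 ≤ n) (ξ : ℤ) (v : Fin n → ℝ) (j : Fin n) :
    (Mmat n ξ).mulVec v j
      = (1/2) * Real.cos (2 * Real.pi * (ξ : ℝ) * ((j : ℕ) : ℝ) / (n : ℝ)) * v j
        + (1/4) * v (j + 1) + (1/4) * v (j - 1) := by
  have hiff : ∀ k : Fin n, (j = k + 1) ↔ (k = j - 1) := by
    intro k
    constructor
    · intro h; rw [h]; simp
    · intro h; rw [h]; simp
  set dj := (1/2) * Real.cos (2 * Real.pi * (ξ : ℝ) * ((j : ℕ) : ℝ) / (n : ℝ)) with hdj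
  have e1 : ∑ k, (if k = j then dj else 0) * v k = dj * v j := by
    simp [ite_mul, Finset.sum_ite_eq']
  have e2 : ∑ k, (1/4 : ℝ) * (if k = j + 1 then (1:ℝ) else 0) * v k = (1/4) * v (j+1) := by
    simp [ite_mul, mul_ite, Finset.sum_ite_eq']
  have e3 : ∑ k, (1/4 : ℝ) * (if k = j - 1 then (1:ℝ) else 0) * v k = (1/4) * v (j-1) := by
    simp [ite_mul, mul_ite, Finset.sum_ite_eq']
  calc (Mmat n ξ).mulVec v j
      = ∑ k, ((if k = j then dj else 0) * v k
          + ((1/4 : ℝ) * (if k = j + 1 then (1:ℝ) else 0) * v k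
            + (1/4 : ℝ) * (if k = j - 1 then (1:ℝ) else 0) * v k)) := by
        unfold Matrix.mulVec dotProduct
        refine Finset.sum_congr rfl (fun k _ => ?_)
        show Mmat n ξ j k * v k = _
        rw [Mmat_apply n hn ξ j k, if_congr (hiff k) rfl rfl]
        ring
    _ = (∑ k, (if k = j then dj else 0) * v k)
        + ((∑ k, (1/4 : ℝ) * (if k = j + 1 then (1:ℝ) else 0) * v k)
          + (∑ k, (1/4 : ℝ) * (if k = j - 1 then (1:ℝ) else 0) * v k)) := by
        rw [Finset.sum_add_distrib, Finset.sum_add_distrib]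
    _ = _ := by rw [e1, e2, e3]; ring

set_option maxHeartbeats 1000000 in
/-- For every `n ≥ 3` and every `ξ` with `n / log n ≤ ξ ≤ n/2`, the largest eigenvalue
of `M(ξ)` is at most `1 - (3/4)·(ξ/n)²`; equivalently every eigenvalue `β` of `M(ξ)`
satisfies `β ≤ 1 - (3/4)·(ξ/n)²`. -/
theorem Mmat_top_eigenvalue_bound_large_xi (n : ℕ) (hn : 3 ≤ n) (ξ : ℕ)
    (hξ₁ : (n : ℝ) / Real.log n ≤ (ξ : ℝ)) (hξ₂ : (ξ : ℝ) ≤ (n : ℝ) / 2) :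
    ∀ β ∈ spectrum ℝ (Mmat n (ξ : ℤ)),
      β ≤ 1 - (3/4) * ((ξ : ℝ) / (n : ℝ)) ^ 2 := by
  intro β hβ
  haveI : NeZero n := ⟨by omega⟩
  rw [← AlgEquiv.spectrum_eq (Matrix.toLinAlgEquiv' : Matrix (Fin n) (Fin n) ℝ ≃ₐ[ℝ] _)
      (Mmat n (ξ:ℤ))] at hβ
  have hev := Module.End.hasEigenvalue_iff_mem_spectrum.mpr hβ
  obtain ⟨v, hv⟩ := hev.exists_hasEigenvector
  have hv0 := hv.right
  have hmv : (Mmat n (ξ:ℤ)).mulVec v = β • v := by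
    have := hv.apply_eq_smul
    rwa [Matrix.toLinAlgEquiv'_apply] at this
  have hn0 : (0:ℝ) < n := by
    have : (0:ℕ) < n := by omega
    exact_mod_cast this
  set r : ℝ := (ξ:ℝ)/(n:ℝ) with hrdef
  have hr0 : 0 ≤ r := by positivity
  have hr2 : r ≤ 1/2 := by rw [hrdef, div_le_iff₀ hn0]; linarith
  set d : Fin n → ℝ := fun j => (1/2) * Real.cos (2 * Real.pi * ((ξ:ℤ) : ℝ) * ((j : ℕ) : ℝ) / (n : ℝ)) with hd
  set C : ℝ := 1 - 3/4 * r^2 with hC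
  set A : Fin n → ℝ := fun j => (C - d j)/2 with hA
  set S := ∑ j, v j^2 with hS
  have hSpos : 0 < S := by
    obtain ⟨j0, hj0⟩ : ∃ j0, v j0 ≠ 0 := Function.ne_iff.mp hv0
    refine Finset.sum_pos' (fun i _ => sq_nonneg _) ⟨j0, Finset.mem_univ _, ?_⟩
    exact lt_of_le_of_ne (sq_nonneg _) (Ne.symm (pow_ne_zero 2 hj0))
  -- quadratic form identity
  have h1 : β * S = ∑ j, v j * ((Mmat n (ξ:ℤ)).mulVec v j) := by
    rw [hS, Finset.mul_sum]
    refine Finset.sum_congr rfl (fun j _ => ?_)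
    rw [hmv]
    simp only [Pi.smul_apply, smul_eq_mul]
    ring
  have h2 : β * S = ∑ j, (d j * v j^2 + (1/4)*(v j * v (j+1)) + (1/4)*(v j * v (j-1))) := by
    rw [h1]
    refine Finset.sum_congr rfl (fun j _ => ?_)
    rw [mulVec_Mmat n hn (ξ:ℤ) v j]
    simp only [hd]
    ring
  have hre : ∑ j, v j * v (j - 1) = ∑ j, v j * v (j + 1) :=
    (Fintype.sum_equiv (Equiv.addRight (1 : Fin n)) (fun x => v x * v (x+1))
      (fun j => v j * v (j-1)) (fun x => by simp [mul_comm])).symm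
  have hbS : β * S = ∑ j, d j * v j^2 + (1/2) * ∑ j, (v j * v (j+1)) := by
    rw [h2, Finset.sum_add_distrib, Finset.sum_add_distrib, ← Finset.mul_sum, ← Finset.mul_sum,
      hre]
    ring
  -- bounds on A
  have hA5 : ∀ j, 5/32 ≤ A j := by
    intro j
    have hcos : Real.cos (2 * Real.pi * ((ξ:ℤ) : ℝ) * ((j : ℕ) : ℝ) / (n : ℝ)) ≤ 1 :=
      Real.cos_le_one _
    have : d j ≤ 1/2 := by rw [hd]; simp only []; linarith
    simp only [hA, hC]
    nlinarith
  have hAA : ∀ j, 1/16 ≤ A j * A (j+1) := by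
    intro j
    have hcs := cos_succ n hn (ξ:ℤ) j
    have hk := key_ineq r (2 * Real.pi * ((ξ:ℤ) : ℝ) * ((j : ℕ) : ℝ) / (n : ℝ)) hr0 hr2
    have hrr : ((ξ:ℤ):ℝ)/(n:ℝ) = r := by rw [hrdef]; push_cast; ring
    rw [hrr] at hcs
    have hAj : A j = (1 - 3/4*r^2)/2
        - Real.cos (2 * Real.pi * ((ξ:ℤ) : ℝ) * ((j : ℕ) : ℝ) / (n : ℝ)) / 4 := by
      simp only [hA, hC, hd]; ring
    have hAj1 : A (j+1) = (1 - 3/4*r^2)/2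
        - Real.cos (2 * Real.pi * ((ξ:ℤ) : ℝ) * ((j : ℕ) : ℝ) / (n : ℝ) + 2*Real.pi*r) / 4 := by
      simp only [hA, hC, hd]; rw [hcs]; ring
    rw [hAj, hAj1]
    exact hk
  have hterm : ∀ j, 0 ≤ A j * v j^2 - (1/2)*(v j * v (j+1)) + A (j+1) * v (j+1)^2 := by
    intro j
    have h5 := hA5 j
    have h5' := hA5 (j+1)
    have hp := hAA j
    nlinarith [sq_nonneg (4 * A j * v j - v (j+1)), sq_nonneg (v (j+1)), sq_nonneg (v j),
      mul_nonneg (mul_nonneg (by linarith : (0:ℝ) ≤ A j) (by linarith : (0:ℝ) ≤ A (j+1)))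
        (sq_nonneg (v (j+1)))]
  have hreA : ∑ j, A (j+1) * v (j+1)^2 = ∑ j, A j * v j^2 :=
    sum_shift (fun j => A j * v j^2)
  have hCS : C * S = 2 * (∑ j, A j * v j^2) + ∑ j, d j * v j^2 := by
    rw [hS, Finset.mul_sum, Finset.mul_sum, ← Finset.sum_add_distrib]
    refine Finset.sum_congr rfl (fun j _ => ?_)
    simp only [hA]
    ring
  have hsum : C * S - β * S
      = ∑ j, (A j * v j^2 - (1/2)*(v j * v (j+1)) + A (j+1) * v (j+1)^2) := by
    have hR : ∑ j, (A j * v j^2 - (1/2)*(v j * v (j+1)) + A (j+1) * v (j+1)^2)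
        = (∑ j, A j * v j^2) - (1/2) * (∑ j, (v j * v (j+1))) + ∑ j, A j * v j^2 := by
      rw [Finset.sum_add_distrib, Finset.sum_sub_distrib, ← Finset.mul_sum, hreA]
    rw [hR, hbS, hCS]
    ring
  have hnonneg : 0 ≤ C * S - β * S := by
    rw [hsum]
    exact Finset.sum_nonneg (fun j _ => hterm j)
  nlinarith [hnonneg, hSpos]
end

section
/- For every odd integer n ≥ 3 and every integer ξ with 1 ≤ ξ ≤ n−1, every eigenvalue β of the matrix M(ξ) satisfies −1 < β < 1. -/
open Matrix Real

lemma ZMod.natCast_val_eq_finEquiv {n : ℕ} [NeZero n] (k : Fin n) :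
    ((k : ℕ) : ZMod n) = ZMod.finEquiv n k := by
  obtain ⟨m, rfl⟩ : ∃ m, n = m + 1 := ⟨n - 1, by have := NeZero.pos n; omega⟩
  exact Fin.cast_val_eq_self k

lemma Real.cos_two_pi_mul_div_lt_one {m : ℕ} (hm : m ≠ 0) {ξ : ℤ} (hξ : ¬(m : ℤ) ∣ ξ) :
    cos (2 * π * ξ / m) < 1 := by
  refine (cos_le_one _).lt_of_ne fun h => hξ ?_
  obtain ⟨k, hk⟩ := (cos_eq_one_iff _).mp h
  rw [eq_div_iff (by positivity)] at hk
  have hk' : (((m * k : ℤ) : ℝ)) * (2 * π) = ξ * (2 * π) := by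
    push_cast
    linear_combination hk
  exact ⟨k, (Int.cast_injective (mul_right_cancel₀ two_pi_pos.ne' hk')).symm⟩

lemma Matrix.exists_mulVec_eq_smul_of_mem_spectrum {ι K : Type*} [Fintype ι] [DecidableEq ι]
    [Field K] {A : Matrix ι ι K} {β : K} (hβ : β ∈ spectrum K A) :
    ∃ v ≠ 0, A *ᵥ v = β • v := by
  rw [← Matrix.spectrum_toLin', ← Module.End.hasEigenvalue_iff_mem_spectrum] at hβ
  obtain ⟨v, hv⟩ := hβ.exists_hasEigenvector
  exact ⟨v, hv.2, by simpa [Matrix.toLin'_apply] using hv.1⟩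

lemma Matrix.spectrum_subset_Ioo_of_dotProduct_mulVec {ι : Type*} [Fintype ι] [DecidableEq ι]
    {A : Matrix ι ι ℝ} (hadd : ∀ v ≠ 0, 0 < v ⬝ᵥ v + v ⬝ᵥ (A *ᵥ v))
    (hsub : ∀ v ≠ 0, 0 < v ⬝ᵥ v - v ⬝ᵥ (A *ᵥ v)) : spectrum ℝ A ⊆ Set.Ioo (-1) 1 := by
  intro β hβ
  obtain ⟨v, hv, hAv⟩ := exists_mulVec_eq_smul_of_mem_spectrum hβ
  have hvv : 0 < v ⬝ᵥ v := by simpa using dotProduct_star_self_pos_iff.mpr hv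
  have hplus := hadd v hv
  have hminus := hsub v hv
  rw [hAv, dotProduct_smul, smul_eq_mul] at hplus hminus
  constructor <;> nlinarith

namespace Fin

variable {n : ℕ} [NeZero n]

lemma add_one_ne_self (hn : 2 ≤ n) (j : Fin n) : j + 1 ≠ j := by
  intro h
  have h1 : (1 : Fin n) = 0 := by simpa using h
  rw [Fin.ext_iff, Fin.val_one', Fin.val_zero, Nat.mod_eq_of_lt hn] at h1
  exact one_ne_zero h1

lemma add_one_ne_sub_one (hn : 3 ≤ n) (j : Fin n) : j + 1 ≠ j - 1 := by
  intro h
  have h2 : ((2 : ℕ) : ZMod n) = 0 := by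
    have := congrArg (ZMod.finEquiv n) h
    rw [map_add, map_sub, map_one] at this
    push_cast
    linear_combination this
  rw [ZMod.natCast_eq_zero_iff] at h2
  have := Nat.le_of_dvd two_pos h2
  omega

open Fin.NatCast in
lemma eq_zero_of_forall_add_one_eq_neg (hodd : Odd n) {R : Type*} [Ring R] [NoZeroDivisors R]
    [CharZero R] {v : Fin n → R} (h : ∀ j, v (j + 1) = -v j) : v = 0 := by
  have hpow (m : ℕ) : v m = (-1) ^ m * v 0 := by
    induction m with
    | zero => simp
    | succ m ih => rw [Nat.cast_succ, h, ih, pow_succ, mul_neg_one, neg_mul]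
  have h0 : v 0 = 0 := by
    simpa [hodd.neg_one_pow, CharZero.eq_neg_self_iff] using hpow n
  ext j
  simpa [h0] using hpow j

open Fin.NatCast in
lemma eq_const_of_forall_add_one_eq {α : Type*} {v : Fin n → α} (h : ∀ j, v (j + 1) = v j)
    (j : Fin n) : v j = v 0 := by
  have hconst (m : ℕ) : v m = v 0 := by
    induction m with
    | zero => simp
    | succ m ih => rw [Nat.cast_succ, h, ih]
  simpa using hconst j

lemma sum_add_add_one_sq {R : Type*} [CommSemiring R] (v : Fin n → R) :
    ∑ j, (v j + v (j + 1)) ^ 2 = 2 * ∑ j, v j ^ 2 + 2 * ∑ j, v j * v (j + 1) := by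
  have hshift : ∑ j, v (j + 1) ^ 2 = ∑ j, v j ^ 2 := Equiv.sum_comp (Equiv.addRight 1) (v · ^ 2)
  simp only [add_sq, Finset.sum_add_distrib, hshift, mul_assoc, ← Finset.mul_sum]
  ring

lemma sum_sub_add_one_sq {R : Type*} [CommRing R] (v : Fin n → R) :
    ∑ j, (v j - v (j + 1)) ^ 2 = 2 * ∑ j, v j ^ 2 - 2 * ∑ j, v j * v (j + 1) := by
  have hshift : ∑ j, v (j + 1) ^ 2 = ∑ j, v j ^ 2 := Equiv.sum_comp (Equiv.addRight 1) (v · ^ 2)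
  simp only [sub_sq, Finset.sum_add_distrib, Finset.sum_sub_distrib, hshift, mul_assoc,
    ← Finset.mul_sum]
  ring

lemma sum_add_add_one_sq_pos (hodd : Odd n) {v : Fin n → ℝ} (hv : v ≠ 0) :
    0 < ∑ j, (v j + v (j + 1)) ^ 2 := by
  refine Finset.sum_pos' (fun j _ => sq_nonneg _) ?_
  by_contra! h
  refine hv (eq_zero_of_forall_add_one_eq_neg hodd fun j => ?_)
  have := h j (Finset.mem_univ j)
  nlinarith [sq_nonneg (v j + v (j + 1))]

end Fin

noncomputable def cosPhase (n : ℕ) (ξ : ℤ) (j : Fin n) : ℝ :=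
  Real.cos (2 * Real.pi * (ξ : ℝ) * ((j : ℕ) : ℝ) / (n : ℝ))

section

variable {n : ℕ} [NeZero n]

lemma Mmat_eq_diagonal_add_permMatrix (hn : 3 ≤ n) (ξ : ℤ) :
    Mmat n ξ = (1 / 2 : ℝ) • diagonal (cosPhase n ξ) + (1 / 4 : ℝ) •
      (Equiv.Perm.permMatrix ℝ (Equiv.addRight 1) +
        Equiv.Perm.permMatrix ℝ (Equiv.subRight 1)) := by
  ext j k
  have hadd : ((k : ℕ) : ZMod n) = ((j : ℕ) : ZMod n) + 1 ↔ j + 1 = k := by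
    simp only [ZMod.natCast_val_eq_finEquiv, ← map_one (ZMod.finEquiv n), ← map_add,
      (ZMod.finEquiv n).injective.eq_iff, eq_comm]
  have hsub : ((k : ℕ) : ZMod n) = ((j : ℕ) : ZMod n) - 1 ↔ j - 1 = k := by
    simp only [ZMod.natCast_val_eq_finEquiv, ← map_one (ZMod.finEquiv n), ← map_sub,
      (ZMod.finEquiv n).injective.eq_iff, eq_comm]
  have h₁ := Fin.add_one_ne_self (by omega) j
  have h₂ := Fin.add_one_ne_self (by omega) (j - 1)
  have h₃ := Fin.add_one_ne_sub_one hn j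
  rw [sub_add_cancel] at h₂
  simp only [Mmat, of_apply, hadd, hsub, Matrix.add_apply, Matrix.smul_apply, diagonal_apply,
    Equiv.Perm.permMatrix, PEquiv.toMatrix_apply, Equiv.toPEquiv_apply, Option.mem_def,
    Option.some.injEq, Equiv.coe_addRight, Equiv.subRight_apply, cosPhase, eq_comm (a := k)]
  split_ifs <;> simp_all

lemma Mmat_mulVec (hn : 3 ≤ n) (ξ : ℤ) (v : Fin n → ℝ) :
    Mmat n ξ *ᵥ v = fun j => cosPhase n ξ j / 2 * v j + (v (j + 1) + v (j - 1)) / 4 := by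
  ext j
  simp only [Mmat_eq_diagonal_add_permMatrix hn, add_mulVec, smul_mulVec, mulVec_diagonal,
    permMatrix_mulVec, Pi.add_apply, Pi.smul_apply, Function.comp_apply, Equiv.coe_addRight,
    Equiv.subRight_apply, smul_eq_mul]
  ring

lemma dotProduct_Mmat_mulVec (hn : 3 ≤ n) (ξ : ℤ) (v : Fin n → ℝ) :
    v ⬝ᵥ (Mmat n ξ *ᵥ v) = (∑ j, cosPhase n ξ j * v j ^ 2) / 2 + (∑ j, v j * v (j + 1)) / 2 := by
  have hshift : ∑ j, v j * v (j - 1) = ∑ j, v j * v (j + 1) := by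
    rw [← Equiv.sum_comp (Equiv.addRight 1)]
    simp [mul_comm]
  calc v ⬝ᵥ (Mmat n ξ *ᵥ v)
      = ∑ j, (cosPhase n ξ j * v j ^ 2 / 2 + v j * v (j + 1) / 4 + v j * v (j - 1) / 4) := by
        simp only [Mmat_mulVec hn, dotProduct]
        exact Finset.sum_congr rfl fun j _ => by ring
    _ = _ := by
        simp only [Finset.sum_add_distrib, ← Finset.sum_div, hshift]
        ring

lemma dotProduct_self_add_dotProduct_Mmat_mulVec (hn : 3 ≤ n) (ξ : ℤ) (v : Fin n → ℝ) :
    v ⬝ᵥ v + v ⬝ᵥ (Mmat n ξ *ᵥ v) =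
      (∑ j, (1 + cosPhase n ξ j) * v j ^ 2) / 2 + (∑ j, (v j + v (j + 1)) ^ 2) / 4 := by
  rw [dotProduct_Mmat_mulVec hn, Fin.sum_add_add_one_sq]
  simp only [add_mul, one_mul, Finset.sum_add_distrib, dotProduct, ← sq]
  ring

lemma dotProduct_self_sub_dotProduct_Mmat_mulVec (hn : 3 ≤ n) (ξ : ℤ) (v : Fin n → ℝ) :
    v ⬝ᵥ v - v ⬝ᵥ (Mmat n ξ *ᵥ v) =
      (∑ j, (1 - cosPhase n ξ j) * v j ^ 2) / 2 + (∑ j, (v j - v (j + 1)) ^ 2) / 4 := by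
  rw [dotProduct_Mmat_mulVec hn, Fin.sum_sub_add_one_sq]
  simp only [sub_mul, one_mul, Finset.sum_sub_distrib, dotProduct, ← sq]
  ring

lemma cosPhase_one_lt_one (hn : 2 ≤ n) {ξ : ℤ} (hξ : ¬(n : ℤ) ∣ ξ) : cosPhase n ξ 1 < 1 := by
  rw [cosPhase, Fin.val_one', Nat.mod_eq_of_lt hn, Nat.cast_one, mul_one]
  exact Real.cos_two_pi_mul_div_lt_one (NeZero.ne n) hξ

lemma dotProduct_self_add_dotProduct_Mmat_mulVec_pos (hodd : Odd n) (hn : 3 ≤ n) (ξ : ℤ)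
    {v : Fin n → ℝ} (hv : v ≠ 0) : 0 < v ⬝ᵥ v + v ⬝ᵥ (Mmat n ξ *ᵥ v) := by
  have hcos : ∀ j, 0 ≤ (1 + cosPhase n ξ j) * v j ^ 2 := fun j =>
    mul_nonneg (neg_le_iff_add_nonneg'.mp (neg_one_le_cos _)) (sq_nonneg _)
  rw [dotProduct_self_add_dotProduct_Mmat_mulVec hn]
  have := Finset.sum_nonneg fun j (_ : j ∈ Finset.univ) => hcos j
  have := Fin.sum_add_add_one_sq_pos hodd hv
  positivity

lemma dotProduct_self_sub_dotProduct_Mmat_mulVec_pos (hn : 3 ≤ n) {ξ : ℤ} (hξ : ¬(n : ℤ) ∣ ξ)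
    {v : Fin n → ℝ} (hv : v ≠ 0) : 0 < v ⬝ᵥ v - v ⬝ᵥ (Mmat n ξ *ᵥ v) := by
  have hcos : ∀ j, 0 ≤ (1 - cosPhase n ξ j) * v j ^ 2 := fun j =>
    mul_nonneg (sub_nonneg.mpr (cos_le_one _)) (sq_nonneg _)
  rw [dotProduct_self_sub_dotProduct_Mmat_mulVec hn]
  have hdiff := Finset.sum_nonneg fun j (_ : j ∈ Finset.univ) => sq_nonneg (v j - v (j + 1))
  have hdiag := Finset.sum_nonneg fun j (_ : j ∈ Finset.univ) => hcos j
  by_cases hconst : ∀ j, v (j + 1) = v j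
  · have hv0 : v 0 ≠ 0 := fun h0 =>
      hv (funext fun j => by rw [Fin.eq_const_of_forall_add_one_eq hconst j, h0, Pi.zero_apply])
    have hterm : 0 < (1 - cosPhase n ξ 1) * v 1 ^ 2 := by
      rw [Fin.eq_const_of_forall_add_one_eq hconst 1]
      have := sub_pos.mpr (cosPhase_one_lt_one (by omega) hξ)
      positivity
    have := Finset.single_le_sum (fun j _ => hcos j) (Finset.mem_univ 1)
    linarith
  · obtain ⟨j, hj⟩ := not_forall.mp hconst
    have hj' := sub_ne_zero.mpr (Ne.symm hj)
    have : 0 < ∑ j, (v j - v (j + 1)) ^ 2 :=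
      Finset.sum_pos' (fun j _ => sq_nonneg _) ⟨j, Finset.mem_univ j, by positivity⟩
    linarith

end

theorem Mmat_eigenvalues_strictly_between_general (n : ℕ) (hodd : Odd n) (ξ : ℕ)
    (hξ₁ : 1 ≤ ξ) (hξ₂ : ξ ≤ n - 1) :
    ∀ β ∈ spectrum ℝ (Mmat n (ξ : ℤ)), -1 < β ∧ β < 1 := by
  have hn : 3 ≤ n := by
    obtain ⟨k, rfl⟩ := hodd
    omega
  have : NeZero n := ⟨by omega⟩
  have hξ : ¬(n : ℤ) ∣ ξ := fun h => by
    have := Int.le_of_dvd (by omega) h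
    omega
  exact spectrum_subset_Ioo_of_dotProduct_mulVec
    (fun _ hv => dotProduct_self_add_dotProduct_Mmat_mulVec_pos hodd hn _ hv)
    (fun _ hv => dotProduct_self_sub_dotProduct_Mmat_mulVec_pos hn hξ hv)

/-- For every odd `n ≥ 3` and every `1 ≤ ξ ≤ n - 1`, every eigenvalue `β` of `M(ξ)`
satisfies `-1 < β < 1`. -/
theorem Mmat_eigenvalues_strictly_between (n : ℕ) (hodd : Odd n) (hn : 3 ≤ n) (ξ : ℕ)
    (hξ₁ : 1 ≤ ξ) (hξ₂ : ξ ≤ n - 1) :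
    ∀ β ∈ spectrum ℝ (Mmat n (ξ : ℤ)), -1 < β ∧ β < 1 :=
  Mmat_eigenvalues_strictly_between_general n hodd ξ hξ₁ hξ₂
end
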